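/- Given a 2-fair energy game (G,E_f,En^f), the winning region of player 1 equals the winning region of player 1 in the ordinary (non-fair) energy game (G,En) on the same arena with fair edges treated as regular edges. -/

import Mathlib

/-!
Common framework: weighted game arenas, plays, strategies, mean-payoff and
energy objectives, strong transition fairness.
-/

open Filter

/-- A two-player weighted game arena: `p1` is the set of player-1 nodes
(player-2 nodes are the complement), `edge` the edge relation, `w` the integer
weight function, and every node has at least one outgoing edge. -/
structure Arena (Q : Type) where
  p1 : Set Q
  edge : Q → Q → Prop
  w : Q → Q → ℤ
  succ_exists : ∀ q, ∃ q', edge q q'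

variable {Q : Type}

/-- A strategy: to every history `H` (the sequence of previously visited nodes)
and current node `q`, it assigns an edge-successor of `q`.  (It is only ever
consulted at the nodes of the corresponding player.) -/
def Strategy (A : Arena Q) : Type :=
  { f : List Q → Q → Q // ∀ H q, A.edge q (f H q) }

open Classical in
/-- Auxiliary: the history (list of earlier nodes) and the current node after
`n` steps of the play from `q` in which player 1 uses `σ` and player 2 uses `π`. -/
noncomputable def hist (A : Arena Q) (σ π : Strategy A) (q : Q) : ℕ → List Q × Q
  | 0 => ([], q)
  | n + 1 =>
    let p := hist A σ π q n
    (p.1 ++ [p.2], if p.2 ∈ A.p1 then σ.1 p.1 p.2 else π.1 p.1 p.2)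

/-- `play A σ π q` is the unique play from `q` conforming with the player-1
strategy `σ` and the player-2 strategy `π`. -/
noncomputable def play (A : Arena Q) (σ π : Strategy A) (q : Q) (n : ℕ) : Q :=
  (hist A σ π q n).2

/-- Weight `w(τ[0;i])` of the prefix of length `i` of the play `τ`. -/
def prefWeight (A : Arena Q) (τ : ℕ → Q) (i : ℕ) : ℤ :=
  ∑ j ∈ Finset.range i, A.w (τ j) (τ (j + 1))

/-- `avg(τ) = liminf_{i→∞} w(τ[0;i])/i`. -/
noncomputable def mpAvg (A : Arena Q) (τ : ℕ → Q) : ℝ :=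
  Filter.liminf (fun i : ℕ => (prefWeight A τ i : ℝ) / (i : ℝ)) Filter.atTop

/-- A play `τ` is fair (w.r.t. the fair edges `Ef`) if every fair edge whose
source node occurs infinitely often in `τ` is itself taken infinitely often. -/
def FairPlay (Ef : Q → Q → Prop) (τ : ℕ → Q) : Prop :=
  ∀ q q', Ef q q' → (∀ N, ∃ i ≥ N, τ i = q) →
    (∀ N, ∃ i ≥ N, τ i = q ∧ τ (i + 1) = q')

/-- A strategy is memoryless (positional) if its choice depends only on the
current node. -/
def Memoryless (A : Arena Q) (σ : Strategy A) : Prop :=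
  ∀ H₁ H₂ q, σ.1 H₁ q = σ.1 H₂ q

/-- A strategy is finite-memory if it is implemented by a memory structure
`(M, m0, α, β)` with `M` finite: the choice after history `H` at node `q` is
`β (α̂ m0 H) q`, where `α̂` iterates the update function `α` along `H`. -/
def FiniteMemory (A : Arena Q) (σ : Strategy A) : Prop :=
  ∃ (M : Type) (_ : Finite M) (m0 : M) (α : M → Q → M) (β : M → Q → Q),
    ∀ H q, σ.1 H q = β (H.foldl α m0) q

/-- Energy objective with initial credit `c`: every prefix weight stays ≥ `-c`. -/
def EnObj (A : Arena Q) (c : ℕ) (τ : ℕ → Q) : Prop :=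
  ∀ i : ℕ, 0 ≤ (c : ℤ) + prefWeight A τ i

/-- Player-1 winning region for an abstract objective. -/
def Win1 (A : Arena Q) (Obj : (ℕ → Q) → Prop) (q : Q) : Prop :=
  ∃ σ : Strategy A, ∀ π : Strategy A, Obj (play A σ π q)

/-- Player-2 winning region for an abstract objective. -/
def Win2 (A : Arena Q) (Obj : (ℕ → Q) → Prop) (q : Q) : Prop :=
  ∃ π : Strategy A, ∀ σ : Strategy A, ¬ Obj (play A σ π q)

/-- The `i`-fair mean-payoff objective `MP_v^f` (for player 1), where `i = true`
means the arena is 1-fair and `i = false` means it is 2-fair: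
`MP_v ∩ {fair plays}` in the 1-fair case and `MP_v ∪ {non-fair plays}` in the
2-fair case. -/
def MPfObj (A : Arena Q) (Ef : Q → Q → Prop) (v : ℝ) (i : Bool) (τ : ℕ → Q) : Prop :=
  if i then (v ≤ mpAvg A τ ∧ FairPlay Ef τ)
  else (v ≤ mpAvg A τ ∨ ¬ FairPlay Ef τ)

/-- Player-1 winning region of a 1-fair energy game with unknown initial credit. -/
def Win1En1f (A : Arena Q) (Ef : Q → Q → Prop) (q : Q) : Prop :=
  ∃ c : ℕ, ∃ σ : Strategy A, ∀ π : Strategy A,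
    EnObj A c (play A σ π q) ∧ FairPlay Ef (play A σ π q)

/-- Player-2 winning region of a 1-fair energy game with unknown initial credit. -/
def Win2En1f (A : Arena Q) (Ef : Q → Q → Prop) (q : Q) : Prop :=
  ∃ π : Strategy A, ∀ c : ℕ, ∀ σ : Strategy A,
    ¬ (EnObj A c (play A σ π q) ∧ FairPlay Ef (play A σ π q))

/-- Player-1 winning region of a 2-fair energy game with unknown initial credit. -/
def Win1En2f (A : Arena Q) (Ef : Q → Q → Prop) (q : Q) : Prop :=
  ∃ c : ℕ, ∃ σ : Strategy A, ∀ π : Strategy A,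
    EnObj A c (play A σ π q) ∨ ¬ FairPlay Ef (play A σ π q)

/-- Player-2 winning region of a 2-fair energy game with unknown initial credit. -/
def Win2En2f (A : Arena Q) (Ef : Q → Q → Prop) (q : Q) : Prop :=
  ∃ π : Strategy A, ∀ c : ℕ, ∀ σ : Strategy A,
    ¬ (EnObj A c (play A σ π q) ∨ ¬ FairPlay Ef (play A σ π q))

/-- Player-1 winning region of an ordinary (non-fair) energy game with unknown
initial credit. -/
def Win1En (A : Arena Q) (q : Q) : Prop :=
  ∃ c : ℕ, ∃ σ : Strategy A, ∀ π : Strategy A, EnObj A c (play A σ π q)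

/-- Player-2 winning region of an ordinary (non-fair) energy game with unknown
initial credit. -/
def Win2En (A : Arena Q) (q : Q) : Prop :=
  ∃ π : Strategy A, ∀ c : ℕ, ∀ σ : Strategy A, ¬ EnObj A c (play A σ π q)

/-! Auxiliary machinery for the proof. -/

/-- A default successor of a node. -/
noncomputable def dflt (A : Arena Q) (q : Q) : Q := (A.succ_exists q).choose

lemma dflt_edge (A : Arena Q) (q : Q) : A.edge q (dflt A q) :=
  (A.succ_exists q).choose_spec

open Classical in
/-- The list of fair successors of a node. -/
noncomputable def fairList [Fintype Q] (Ef : Q → Q → Prop) (a : Q) : List Q :=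
  (Finset.univ.filter (fun b => Ef a b)).toList

lemma mem_fairList [Fintype Q] (Ef : Q → Q → Prop) (a b : Q) :
    b ∈ fairList Ef a ↔ Ef a b := by
  simp [fairList]

open Classical in
/-- Number of occurrences of `a` in `H`. -/
noncomputable def cnt (H : List Q) (a : Q) : ℕ :=
  (H.filter (fun x => decide (x = a))).length

lemma cnt_nil (a : Q) : cnt ([] : List Q) a = 0 := rfl

open Classical in
lemma cnt_append_singleton (H : List Q) (x a : Q) :
    cnt (H ++ [x]) a = cnt H a + if x = a then 1 else 0 := by
  simp only [cnt, List.filter_append, List.length_append]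
  by_cases h : x = a <;> simp [h]

open Classical in
lemma hist_succ (A : Arena Q) (σ π : Strategy A) (q : Q) (n : ℕ) :
    hist A σ π q (n + 1) =
      ((hist A σ π q n).1 ++ [(hist A σ π q n).2],
        if (hist A σ π q n).2 ∈ A.p1 then σ.1 (hist A σ π q n).1 (hist A σ π q n).2
        else π.1 (hist A σ π q n).1 (hist A σ π q n).2) := rfl

lemma hist_fst_length (A : Arena Q) (σ π : Strategy A) (q : Q) (n : ℕ) :
    (hist A σ π q n).1.length = n := by
  induction n with
  | zero => rfl
  | succ n ih => rw [hist_succ]; simp [ih]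

open Classical in
/-- If two player-2 strategies agree on histories of length `< i`, the plays
coincide up to step `i`. -/
lemma hist_agree (A : Arena Q) (σ π π' : Strategy A) (q : Q) (i : ℕ)
    (h : ∀ H r, H.length < i → π.1 H r = π'.1 H r) :
    ∀ n ≤ i, hist A σ π q n = hist A σ π' q n := by
  intro n hn
  induction n with
  | zero => rfl
  | succ n ih =>
    have he := ih (Nat.le_of_succ_le hn)
    rw [hist_succ, hist_succ, he]
    have hlen : (hist A σ π' q n).1.length < i := by
      rw [hist_fst_length]; exact hn
    by_cases hp : (hist A σ π' q n).2 ∈ A.p1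
    · simp [hp]
    · simp [hp, h _ _ hlen]

open Classical in
/-- A counter that starts at `0`, increments exactly at steps satisfying `P`,
with `P` holding infinitely often, attains every value `v` at some step
`n ≥ v` satisfying `P`. -/
lemma jump_lemma (f : ℕ → ℕ) (P : ℕ → Prop) (h0 : f 0 = 0)
    (hstep : ∀ n, f (n + 1) = f n + if P n then 1 else 0)
    (hinf : ∀ N, ∃ n ≥ N, P n) :
    ∀ v, ∃ n, v ≤ n ∧ f n = v ∧ P n := by
  classical
  have hle : ∀ n, f n ≤ n := by
    intro n
    induction n with
    | zero => simp [h0]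
    | succ n ih => rw [hstep]; split <;> omega
  have hmono0 : Monotone f :=
    monotone_nat_of_le_succ (fun n => by rw [hstep]; split <;> omega)
  have hmono : ∀ m n, m ≤ n → f m ≤ f n := fun m n h => hmono0 h
  have hunb : ∀ v, ∃ n, v < f n := by
    intro v
    induction v with
    | zero =>
      obtain ⟨n, _, hp⟩ := hinf 0
      have h1 : f (n + 1) = f n + 1 := by rw [hstep, if_pos hp]
      exact ⟨n + 1, by omega⟩
    | succ v ih =>
      obtain ⟨n, hn⟩ := ih
      obtain ⟨m, hm, hp⟩ := hinf n
      have h1 : f (m + 1) = f m + 1 := by rw [hstep, if_pos hp]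
      have h2 := hmono n m hm
      exact ⟨m + 1, by omega⟩
  intro v
  have hex : ∃ n, v < f n := hunb v
  have hN : v < f (Nat.find hex) := Nat.find_spec hex
  have hN0 : Nat.find hex ≠ 0 := by
    intro h
    rw [h, h0] at hN; omega
  obtain ⟨n, hn2⟩ : ∃ n, Nat.find hex = n + 1 := ⟨Nat.find hex - 1, by omega⟩
  have hnot : ¬ v < f n := Nat.find_min hex (by omega)
  rw [hn2, hstep] at hN
  by_cases hp : P n
  · simp only [hp, if_true] at hN
    have hfn : f n = v := by omega
    exact ⟨n, by rw [← hfn]; exact hle n, hfn, hp⟩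
  · simp only [hp, if_false] at hN
    omega

open Classical in
/-- Modify player-2 strategy `π` so that it plays like `π` for the first `i`
steps and then plays round-robin over fair successors (guaranteeing a fair
play). -/
noncomputable def fairify [Fintype Q] (A : Arena Q) (Ef : Q → Q → Prop)
    (hEf : ∀ a b, Ef a b → A.edge a b) (π : Strategy A) (i : ℕ) : Strategy A :=
  ⟨fun H q =>
    if H.length < i then π.1 H q
    else if hL : 0 < (fairList Ef q).length then
      (fairList Ef q).get ⟨cnt H q % (fairList Ef q).length, Nat.mod_lt _ hL⟩
    else dflt A q, by
    intro H q
    dsimp only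
    split
    · exact π.2 H q
    · split
      · exact hEf _ _ ((mem_fairList Ef q _).mp (List.get_mem _ _))
      · exact dflt_edge A q⟩

/-- In a 2-fair energy game, player 1's winning region equals
player 1's winning region of the ordinary energy game on the same arena. -/
theorem twofair_energy_player1_region
    (Q : Type) [Fintype Q] (A : Arena Q) (Ef : Q → Q → Prop)
    (hEf : ∀ a b, Ef a b → A.edge a b)
    (h2fair : ∀ a b, Ef a b → a ∉ A.p1) :
    ∀ q : Q, Win1En2f A Ef q ↔ Win1En A q := by
  intro q
  constructor
  · rintro ⟨c, σ, h⟩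
    refine ⟨c, σ, fun π => ?_⟩
    by_contra hEn
    simp only [EnObj, not_forall, not_le] at hEn
    obtain ⟨i, hi⟩ := hEn
    set π' := fairify A Ef hEf π i with hπ'
    have hagreeπ : ∀ H r, H.length < i → π.1 H r = π'.1 H r := by
      intro H r hH
      simp [hπ', fairify, hH]
    have hagree : ∀ n ≤ i, hist A σ π q n = hist A σ π' q n :=
      hist_agree A σ π π' q i hagreeπ
    have hpw : prefWeight A (play A σ π' q) i = prefWeight A (play A σ π q) i := by
      unfold prefWeight
      refine Finset.sum_congr rfl fun j hj => ?_
      have hj' : j < i := Finset.mem_range.mp hj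
      show A.w (hist A σ π' q j).2 (hist A σ π' q (j + 1)).2 =
        A.w (hist A σ π q j).2 (hist A σ π q (j + 1)).2
      rw [hagree j (le_of_lt hj'), hagree (j + 1) hj']
    have hEn' : ¬ EnObj A c (play A σ π' q) := by
      intro hE
      have := hE i
      rw [hpw] at this
      omega
    have hfair : FairPlay Ef (play A σ π' q) := by
      intro a b hab hinfa
      have ha2 : a ∉ A.p1 := h2fair a b hab
      have hbL : b ∈ fairList Ef a := (mem_fairList Ef a b).mpr hab
      obtain ⟨⟨j, hj⟩, hgj⟩ := List.mem_iff_get.mp hbL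
      set len := (fairList Ef a).length with hlendef
      have hlen : 0 < len := Nat.lt_of_le_of_lt (Nat.zero_le _) hj
      have key := jump_lemma (fun n => cnt (hist A σ π' q n).1 a)
        (fun n => play A σ π' q n = a)
        (by simp [hist, cnt_nil])
        (by
          intro n
          show cnt (hist A σ π' q (n + 1)).1 a = _
          rw [hist_succ, cnt_append_singleton]
          rfl)
        hinfa
      intro N
      set v := j + len * (N + i + 1) with hv
      have hvge : N + i + 1 ≤ v := by
        have : N + i + 1 ≤ len * (N + i + 1) := Nat.le_mul_of_pos_left _ hlen
        omega
      obtain ⟨n, hvn, hfv, hpn⟩ := key v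
      refine ⟨n, by omega, hpn, ?_⟩
      show (hist A σ π' q (n + 1)).2 = b
      rw [hist_succ]
      have hτn : (hist A σ π' q n).2 = a := hpn
      simp only [hτn, ha2, if_false]
      have hHlen : ¬ (hist A σ π' q n).1.length < i := by
        rw [hist_fst_length]; omega
      show π'.1 (hist A σ π' q n).1 a = b
      rw [hπ']
      show (if (hist A σ π' q n).1.length < i then _ else _) = b
      rw [if_neg hHlen, dif_pos hlen]
      have hcnt : cnt (hist A σ π' q n).1 a = v := hfv
      have hmod : v % len = j := by
        rw [hv, Nat.add_mul_mod_self_left, Nat.mod_eq_of_lt hj]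
      rw [← hgj]
      congr 1
      exact Fin.ext (show cnt (hist A σ π' q n).1 a % len = j by rw [hcnt, hmod])
    rcases h π' with hE | hnf
    · exact hEn' hE
    · exact hnf hfair
  · rintro ⟨c, σ, h⟩
    exact ⟨c, σ, fun π => Or.inl (h π)⟩
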